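/- The mutual information of the Z-channel with crossover probability ε ∈ (0,1/2) under input distribution (p, 1-p), given by I(p) = H₂(p(1-ε)) - p·H₂(ε), attains its maximum over p ∈ [0,1] at p* = [(1-ε)(1 + 2^{H₂(ε)/(1-ε)})]^{-1}, with maximum value log₂(1 + 2^{-H₂(ε)/(1-ε)}). -/

import Mathlib

/-- Binary entropy function (base 2). -/
noncomputable def H2 (p : ℝ) : ℝ := -p * Real.logb 2 p - (1 - p) * Real.logb 2 (1 - p)

/-- Mutual information of the Z-channel with crossover probability `ε`
under input distribution `(p, 1-p)`. -/
noncomputable def Iz (ε p : ℝ) : ℝ := H2 (p * (1 - ε)) - p * H2 ε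

/-!
With `q = p (1 - ε)` and `h = H₂(ε) / (1 - ε)` the mutual information is `I(p) = H₂(q) - q h`.
Gibbs' inequality against the Bernoulli distribution with parameter `a = (1 + 2^h)⁻¹` gives
`H₂(q) ≤ -q log₂ a - (1 - q) log₂ (1 - a) = q h + log₂ (1 + 2^(-h))`, with equality at `q = a`,
i.e. at `p = p*`.
-/

open Real

lemma negMulLog_le_neg_mul_log_add_sub {x y : ℝ} (hx : 0 ≤ x) (hy : 0 < y) :
    negMulLog x ≤ -x * log y + (y - x) := by
  have hxy : negMulLog x = y * negMulLog (x / y) - x * log y := by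
    conv_lhs => rw [← div_mul_cancel₀ x hy.ne', negMulLog_mul]
    simp only [negMulLog]
    field_simp
    ring
  have hgibbs : y * negMulLog (x / y) ≤ y - x := by
    calc y * negMulLog (x / y) ≤ y * (1 - x / y) :=
          mul_le_mul_of_nonneg_left (negMulLog_le_one_sub_self (by positivity)) hy.le
      _ = y - x := by field_simp
  linarith

lemma binEntropy_le_crossEntropy {q a : ℝ} (hq₀ : 0 ≤ q) (hq₁ : q ≤ 1) (ha₀ : 0 < a)
    (ha₁ : a < 1) : binEntropy q ≤ -q * log a - (1 - q) * log (1 - a) := by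
  rw [binEntropy_eq_negMulLog_add_negMulLog_one_sub]
  have := negMulLog_le_neg_mul_log_add_sub hq₀ ha₀
  have := negMulLog_le_neg_mul_log_add_sub (sub_nonneg.2 hq₁) (sub_pos.2 ha₁)
  linarith

lemma H2_eq_binEntropy_div_log_two (p : ℝ) : H2 p = binEntropy p / log 2 := by
  simp only [H2, binEntropy, logb, log_inv]
  ring

lemma H2_nonneg {p : ℝ} (hp₀ : 0 ≤ p) (hp₁ : p ≤ 1) : 0 ≤ H2 p := by
  rw [H2_eq_binEntropy_div_log_two]
  exact div_nonneg (binEntropy_nonneg hp₀ hp₁) (log_nonneg one_le_two)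

lemma H2_le_crossEntropy {q a : ℝ} (hq₀ : 0 ≤ q) (hq₁ : q ≤ 1) (ha₀ : 0 < a) (ha₁ : a < 1) :
    H2 q ≤ -q * logb 2 a - (1 - q) * logb 2 (1 - a) := by
  have hlog2 : 0 < log 2 := log_pos one_lt_two
  rw [H2_eq_binEntropy_div_log_two, div_le_iff₀ hlog2]
  have := binEntropy_le_crossEntropy hq₀ hq₁ ha₀ ha₁
  simp only [logb]
  field_simp
  linarith

lemma crossEntropy_inv_one_add_rpow {b : ℝ} (hb₀ : 0 < b) (hb₁ : b ≠ 1) (q h : ℝ) :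
    -q * logb b (1 + b ^ h)⁻¹ - (1 - q) * logb b (1 - (1 + b ^ h)⁻¹) =
      q * h + logb b (1 + b ^ (-h)) := by
  have hbh : 0 < b ^ h := rpow_pos_of_pos hb₀ h
  have hone_sub : 1 - (1 + b ^ h)⁻¹ = (1 + b ^ (-h))⁻¹ := by
    rw [rpow_neg hb₀.le]
    field_simp
    ring
  have hlog : logb b (1 + b ^ h) = h + logb b (1 + b ^ (-h)) := by
    have hfactor : 1 + b ^ h = b ^ h * (1 + b ^ (-h)) := by
      rw [rpow_neg hb₀.le]
      field_simp
      ring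
    rw [hfactor, logb_mul hbh.ne' (by positivity), logb_rpow hb₀ hb₁]
  rw [hone_sub, logb_inv, logb_inv, hlog]
  ring

lemma H2_le_mul_add_logb {q : ℝ} (hq₀ : 0 ≤ q) (hq₁ : q ≤ 1) (h : ℝ) :
    H2 q ≤ q * h + logb 2 (1 + 2 ^ (-h)) := by
  have hpos : (0 : ℝ) < 2 ^ h := rpow_pos_of_pos two_pos h
  rw [← crossEntropy_inv_one_add_rpow two_pos (by norm_num) q h]
  exact H2_le_crossEntropy hq₀ hq₁ (by positivity) (inv_lt_one_of_one_lt₀ (by linarith))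

lemma H2_inv_one_add_rpow (h : ℝ) :
    H2 (1 + 2 ^ h)⁻¹ = (1 + 2 ^ h)⁻¹ * h + logb 2 (1 + 2 ^ (-h)) :=
  crossEntropy_inv_one_add_rpow two_pos (by norm_num) _ h

lemma Iz_eq {ε : ℝ} (hε : ε ≠ 1) (p : ℝ) :
    Iz ε p = H2 (p * (1 - ε)) - p * (1 - ε) * (H2 ε / (1 - ε)) := by
  rw [Iz, mul_assoc, mul_div_cancel₀ _ (sub_ne_zero.2 hε.symm)]

theorem zchannel_mutual_information_max (ε : ℝ) (hε0 : 0 < ε) (hε : ε < 1 / 2) :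
    ((1 - ε) * (1 + (2 : ℝ) ^ (H2 ε / (1 - ε))))⁻¹ ∈ Set.Icc (0 : ℝ) 1 ∧
    (∀ p ∈ Set.Icc (0 : ℝ) 1,
        Iz ε p ≤ Iz ε ((1 - ε) * (1 + (2 : ℝ) ^ (H2 ε / (1 - ε))))⁻¹) ∧
    Iz ε ((1 - ε) * (1 + (2 : ℝ) ^ (H2 ε / (1 - ε))))⁻¹ =
      Real.logb 2 (1 + (2 : ℝ) ^ (-(H2 ε / (1 - ε)))) := by
  have hε1 : 0 < 1 - ε := by linarith
  set h := H2 ε / (1 - ε)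
  have hh : 0 ≤ h := div_nonneg (H2_nonneg hε0.le (by linarith)) hε1.le
  have h2h : (1 : ℝ) ≤ 2 ^ h := one_le_rpow one_le_two hh
  have hopt : ((1 - ε) * (1 + 2 ^ h))⁻¹ * (1 - ε) = (1 + 2 ^ h)⁻¹ := by
    field_simp
  have hmax : Iz ε ((1 - ε) * (1 + 2 ^ h))⁻¹ = logb 2 (1 + 2 ^ (-h)) := by
    rw [Iz_eq (by linarith), hopt, H2_inv_one_add_rpow]
    ring
  refine ⟨⟨inv_nonneg.2 (by positivity), inv_le_one_of_one_le₀ (by nlinarith)⟩,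
    fun p ⟨hp₀, hp₁⟩ ↦ ?_, hmax⟩
  rw [hmax, Iz_eq (by linarith)]
  have := H2_le_mul_add_logb (q := p * (1 - ε)) (by nlinarith) (by nlinarith) h
  linarith
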